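/- arXiv:1408.1857 — 5 statements merged into one kernel-verified Lean document; each statement's English description precedes it below -/
import Mathlib

section
/- Let g be a d-dimensional nilpotent real Lie algebra with a semidirect product decomposition g = m ⋉ n, where dim n = k, and fix a Jordan–Hölder series 0 = g_0 ⊆ g_1 ⊆ ⋯ ⊆ g_d = g with g_k = n. If ξ ∈ g* satisfies g(ξ) = m(ξ|m) ⊕ n(ξ|n) (internal direct sum), then J(ξ) = J(ξ|n) ∪ {k + j : j ∈ J(ξ|m)}, and this union is disjoint. -/
open Module

/-- The isotropy subalgebra `g(ξ) = {x ∈ g : ξ([x,y]) = 0 for all y ∈ g}`. -/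
noncomputable def isotropy {g : Type*} [LieRing g] [LieAlgebra ℝ g]
    (ξ : Module.Dual ℝ g) : Submodule ℝ g where
  carrier := {x | ∀ y : g, ξ ⁅x, y⁆ = 0}
  add_mem' := by
    intro a b ha hb y
    simp [add_lie, ha y, hb y]
  zero_mem' := by intro y; simp
  smul_mem' := by
    intro c a ha y
    simp [smul_lie, ha y]

/-- The relative isotropy `W(ξ|W) = {x ∈ W : ξ([x,y]) = 0 for all y ∈ W}`. -/
noncomputable def isotropyOn {g : Type*} [LieRing g] [LieAlgebra ℝ g]
    (W : Submodule ℝ g) (ξ : Module.Dual ℝ g) : Submodule ℝ g where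
  carrier := {x | x ∈ W ∧ ∀ y ∈ W, ξ ⁅x, y⁆ = 0}
  add_mem' := by
    intro a b ha hb
    exact ⟨W.add_mem ha.1 hb.1, fun y hy => by simp [add_lie, ha.2 y hy, hb.2 y hy]⟩
  zero_mem' := ⟨W.zero_mem, fun y hy => by simp⟩
  smul_mem' := by
    intro c a ha
    exact ⟨W.smul_mem c ha.1, fun y hy => by simp [smul_lie, ha.2 y hy]⟩

/-- The jump set of the series `gs`, truncated at index `b`, relative to an
"isotropy" subspace `I`: the set of `j ∈ {1,…,b}` with `gs j ⊄ gs (j-1) + I`. -/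
def jumpSetGen {g : Type*} [LieRing g] [LieAlgebra ℝ g]
    (gs : ℕ → Submodule ℝ g) (b : ℕ) (I : Submodule ℝ g) : Set ℕ :=
  {j | 1 ≤ j ∧ j ≤ b ∧ ¬ gs j ≤ gs (j - 1) ⊔ I}

/-!
In the jump condition `g_j ⊄ g_{j-1} + g(ξ)` with `g(ξ) = m(ξ|m) + n(ξ|n)`, the summand
`m(ξ|m)` is invisible for `j ≤ k`: there everything lives in `n = g_k`, which `m(ξ|m)` meets
trivially, so the modular law removes it. For `j > k` the subspaces contain `n = ker p`, so the
condition may be pushed forward along the projection `p` onto `m`, which kills `n(ξ|n)` and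
fixes `m(ξ|m)`.
-/

theorem le_sup_sup_iff_of_disjoint {α : Type*} [Lattice α] [IsModularLattice α] [OrderBot α]
    {V W N A B : α} (hW : W ≤ N) (hVB : V ⊔ B ≤ N) (hA : Disjoint A N) :
    W ≤ V ⊔ (A ⊔ B) ↔ W ≤ V ⊔ B := by
  refine ⟨fun h => ?_, fun h => h.trans (sup_le_sup_left le_sup_right V)⟩
  calc W ≤ (V ⊔ B ⊔ A) ⊓ N := le_inf (h.trans (le_of_eq (by ac_rfl))) hW
    _ = V ⊔ B := by rw [sup_inf_assoc_of_le A hVB, hA.eq_bot, sup_bot_eq]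

namespace Submodule

variable {R M : Type*} [Ring R] [AddCommGroup M] [Module R M]

theorem map_eq_self_of_forall_apply_eq {f : M →ₗ[R] M} {A : Submodule R M}
    (h : ∀ a ∈ A, f a = a) : A.map f = A := by
  ext x
  refine ⟨?_, fun hx => ⟨x, hx, h x hx⟩⟩
  rintro ⟨a, ha, rfl⟩
  rwa [h a ha]

theorem le_sup_sup_iff_map_projection_le {P N V W A B : Submodule R M} (h : IsCompl P N)
    (hV : N ≤ V) (hA : A ≤ P) (hB : B ≤ N) :
    W ≤ V ⊔ (A ⊔ B) ↔ W.map (P.projection N h) ≤ V.map (P.projection N h) ⊔ A := by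
  have hker : V ⊔ (A ⊔ B) ⊔ LinearMap.ker (P.projection N h) = V ⊔ (A ⊔ B) := by
    rw [ker_projection]
    exact sup_eq_left.mpr (hV.trans le_sup_left)
  have hmapA : A.map (P.projection N h) = A :=
    map_eq_self_of_forall_apply_eq fun a ha => projection_apply_of_mem_left h (hA ha)
  have hmapB : B.map (P.projection N h) = ⊥ :=
    LinearMap.le_ker_iff_map.mp (by rwa [ker_projection])
  rw [← hker, ← LinearMap.map_le_map_iff, map_sup, map_sup, hmapA, hmapB, sup_bot_eq]

end Submodule

theorem isotropyOn_le {g : Type*} [LieRing g] [LieAlgebra ℝ g] (W : Submodule ℝ g)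
    (ξ : Module.Dual ℝ g) : isotropyOn W ξ ≤ W :=
  fun _ hx => hx.1

section JumpSet

variable {g : Type*} [LieRing g] [LieAlgebra ℝ g]

theorem jumpSetGen_eq_union_image_add {gs ms : ℕ → Submodule ℝ g} {I In Im : Submodule ℝ g}
    {k d : ℕ} (hkd : k ≤ d)
    (hlow : ∀ j, 1 ≤ j → j ≤ k → (gs j ≤ gs (j - 1) ⊔ I ↔ gs j ≤ gs (j - 1) ⊔ In))
    (hhigh : ∀ i, 1 ≤ i → i ≤ d - k →
      (gs (k + i) ≤ gs (k + i - 1) ⊔ I ↔ ms i ≤ ms (i - 1) ⊔ Im)) :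
    jumpSetGen gs d I = jumpSetGen gs k In ∪ (k + ·) '' jumpSetGen ms (d - k) Im := by
  ext j
  simp only [jumpSetGen, Set.mem_union, Set.mem_image]
  constructor
  · rintro ⟨hj1, hjd, hjump⟩
    by_cases hjk : j ≤ k
    · exact Or.inl ⟨hj1, hjk, (hlow j hj1 hjk).not.mp hjump⟩
    · obtain ⟨i, rfl⟩ := Nat.exists_eq_add_of_le (Nat.le_of_not_le hjk)
      exact Or.inr ⟨i, ⟨by omega, by omega, (hhigh i (by omega) (by omega)).not.mp hjump⟩, rfl⟩
  · rintro (⟨hj1, hjk, hjump⟩ | ⟨i, ⟨hi1, hid, hjump⟩, rfl⟩)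
    · exact ⟨hj1, hjk.trans hkd, (hlow j hj1 hjk).not.mpr hjump⟩
    · exact ⟨by omega, by omega, (hhigh i hi1 hid).not.mpr hjump⟩

theorem disjoint_jumpSetGen_image_add (gs ms : ℕ → Submodule ℝ g) (I J : Submodule ℝ g)
    (k b : ℕ) : Disjoint (jumpSetGen gs k I) ((k + ·) '' jumpSetGen ms b J) := by
  rw [Set.disjoint_left]
  rintro _ ⟨-, hjk, -⟩ ⟨i, ⟨hi1, -, -⟩, rfl⟩
  dsimp only at hjk
  omega

end JumpSet

theorem stmt4_general {g : Type*} [LieRing g] [LieAlgebra ℝ g] [Module.Finite ℝ g]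
    (n : LieIdeal ℝ g) (m : LieSubalgebra ℝ g)
    (hcompl : IsCompl m.toSubmodule n.toSubmodule)
    (d k : ℕ) (hd : Module.finrank ℝ g = d) (hk : Module.finrank ℝ n.toSubmodule = k)
    -- the Jordan–Hölder series
    (gs : ℕ → Submodule ℝ g)
    (hchain : ∀ j < d, gs j ≤ gs (j + 1))
    (hgk : gs k = n.toSubmodule)
    -- the series of m, i.e. the projections p(g_{k+j}) along n
    (p : g →ₗ[ℝ] g)
    (hp : p = m.toSubmodule.subtype.comp
      (Submodule.linearProjOfIsCompl m.toSubmodule n.toSubmodule hcompl))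
    (ms : ℕ → Submodule ℝ g) (hms : ∀ j, ms j = (gs (k + j)).map p)
    -- the hypothesis g(ξ) = m(ξ|m) ⊕ n(ξ|n)
    (ξ : Module.Dual ℝ g)
    (hiso : isotropy ξ = isotropyOn m.toSubmodule ξ ⊔ isotropyOn n.toSubmodule ξ) :
    jumpSetGen gs d (isotropy ξ) =
        jumpSetGen gs k (isotropyOn n.toSubmodule ξ) ∪
          ((k + ·) '' jumpSetGen ms (d - k) (isotropyOn m.toSubmodule ξ)) ∧
      Disjoint (jumpSetGen gs k (isotropyOn n.toSubmodule ξ))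
        ((k + ·) '' jumpSetGen ms (d - k) (isotropyOn m.toSubmodule ξ)) := by
  have hkd : k ≤ d := hk ▸ hd ▸ Submodule.finrank_le _
  have hmono : MonotoneOn gs (Set.Iic d) :=
    monotoneOn_of_le_add_one Set.ordConnected_Iic fun a _ _ ha => hchain a ha
  have hp' : p = m.toSubmodule.projection n.toSubmodule hcompl := hp
  refine ⟨jumpSetGen_eq_union_image_add hkd (fun j hj1 hjk => ?_) (fun i hi1 hid => ?_),
    disjoint_jumpSetGen_image_add _ _ _ _ _ _⟩
  · have hle : ∀ i ≤ j, gs i ≤ n.toSubmodule := fun i hi =>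
      hgk ▸ hmono (Set.mem_Iic.mpr (by omega)) (Set.mem_Iic.mpr hkd) (by omega)
    rw [hiso]
    exact le_sup_sup_iff_of_disjoint (hle j le_rfl) (sup_le (hle (j - 1) (by omega))
      (isotropyOn_le _ _)) (hcompl.disjoint.mono_left (isotropyOn_le _ _))
  · have hn : n.toSubmodule ≤ gs (k + i - 1) :=
      hgk ▸ hmono (Set.mem_Iic.mpr hkd) (Set.mem_Iic.mpr (by omega)) (by omega)
    rw [hiso, hms, hms, show k + (i - 1) = k + i - 1 by omega, hp']
    exact Submodule.le_sup_sup_iff_map_projection_le hcompl hn (isotropyOn_le _ _)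
      (isotropyOn_le _ _)

/-- for a Jordan–Hölder series of the nilpotent Lie algebra
`g = m ⋉ n` passing through `n` at index `k`, if
`g(ξ) = m(ξ|m) ⊕ n(ξ|n)`, then `J(ξ) = J(ξ|n) ⊔ (k + J(ξ|m))`. -/
theorem stmt4 {g : Type*} [LieRing g] [LieAlgebra ℝ g] [Module.Finite ℝ g]
    [LieRing.IsNilpotent g]
    (n : LieIdeal ℝ g) (m : LieSubalgebra ℝ g)
    (hcompl : IsCompl m.toSubmodule n.toSubmodule)
    (d k : ℕ) (hd : Module.finrank ℝ g = d) (hk : Module.finrank ℝ n.toSubmodule = k)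
    -- the Jordan–Hölder series
    (gs : ℕ → Submodule ℝ g)
    (hgs0 : gs 0 = ⊥) (hgsd : gs d = ⊤)
    (hchain : ∀ j < d, gs j ≤ gs (j + 1))
    (hdim : ∀ j ≤ d, Module.finrank ℝ (gs j) = j)
    (hbr : ∀ j, 1 ≤ j → j ≤ d → ∀ x : g, ∀ y ∈ gs j, ⁅x, y⁆ ∈ gs (j - 1))
    (hgk : gs k = n.toSubmodule)
    -- the series of m, i.e. the projections p(g_{k+j}) along n
    (p : g →ₗ[ℝ] g)
    (hp : p = m.toSubmodule.subtype.comp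
      (Submodule.linearProjOfIsCompl m.toSubmodule n.toSubmodule hcompl))
    (ms : ℕ → Submodule ℝ g) (hms : ∀ j, ms j = (gs (k + j)).map p)
    -- the hypothesis g(ξ) = m(ξ|m) ⊕ n(ξ|n)
    (ξ : Module.Dual ℝ g)
    (hiso : isotropy ξ = isotropyOn m.toSubmodule ξ ⊔ isotropyOn n.toSubmodule ξ)
    (hdisj : Disjoint (isotropyOn m.toSubmodule ξ) (isotropyOn n.toSubmodule ξ)) :
    jumpSetGen gs d (isotropy ξ) =
        jumpSetGen gs k (isotropyOn n.toSubmodule ξ) ∪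
          ((k + ·) '' jumpSetGen ms (d - k) (isotropyOn m.toSubmodule ξ)) ∧
      Disjoint (jumpSetGen gs k (isotropyOn n.toSubmodule ξ))
        ((k + ·) '' jumpSetGen ms (d - k) (isotropyOn m.toSubmodule ξ)) :=
  stmt4_general n m hcompl d k hd hk gs hchain hgk p hp ms hms ξ hiso
end

section
/- Let g be a d-dimensional nilpotent real Lie algebra with a semidirect product decomposition g = m ⋉ n, where dim n = k, and fix a Jordan–Hölder series 0 = g_0 ⊆ g_1 ⊆ ⋯ ⊆ g_d = g with g_k = n. Let ξ ∈ g* satisfy g(ξ) = m(ξ|m) ⊕ n(ξ|n). Then for every j with 1 ≤ j ≤ k one has: j ∈ J(ξ) if and only if n(ξ|n) + g_{j−1} is a proper subspace of n(ξ|n) + g_j, i.e. if and only if j ∈ J(ξ|n). -/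
open Module

/-!
Inside the ideal `n`, the relative isotropy of `m` is invisible: since `g(ξ) = m(ξ|m) ⊕ n(ξ|n)`
with `m(ξ|m) ⊆ m` and `m ∩ n = 0`, the modular law gives `(g_{j-1} + g(ξ)) ∩ n = g_{j-1} + n(ξ|n)`
whenever `g_{j-1} ⊆ n`. Hence `g_j ⊆ g_{j-1} + g(ξ)` iff `g_j ⊆ g_{j-1} + n(ξ|n)` for `j ≤ k`.
-/

theorem le_sup_sup_iff_le_sup_of_disjoint {α : Type*} [Lattice α] [OrderBot α]
    [IsModularLattice α] {a b c x m n : α} (hdisj : Disjoint m n) (hbm : b ≤ m)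
    (han : a ≤ n) (hcn : c ≤ n) (hxn : x ≤ n) :
    x ≤ a ⊔ (b ⊔ c) ↔ x ≤ a ⊔ c := by
  have hinf : (a ⊔ c ⊔ b) ⊓ n = a ⊔ c := by
    rw [sup_inf_assoc_of_le b (sup_le han hcn),
      (hdisj.mono_left hbm).eq_bot, sup_bot_eq]
  refine ⟨fun h => ?_, fun h => h.trans (sup_le_sup_left le_sup_right a)⟩
  calc x ≤ (a ⊔ c ⊔ b) ⊓ n := le_inf (h.trans_eq (by ac_rfl)) hxn
    _ = a ⊔ c := hinf

theorem sup_lt_sup_left_iff_not_le {α : Type*} [Lattice α] {a x i : α} (hax : a ≤ x) :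
    i ⊔ a < i ⊔ x ↔ ¬ x ≤ a ⊔ i := by
  rw [← sup_eq_right.mpr hax, ← sup_assoc, left_lt_sup, sup_comm a i, sup_eq_right.mpr hax]

theorem monotoneOn_Iic_of_le_succ {α : Type*} [Preorder α] {f : ℕ → α} {d : ℕ}
    (hf : ∀ j < d, f j ≤ f (j + 1)) : MonotoneOn f (Set.Iic d) :=
  monotoneOn_of_le_succ Set.ordConnected_Iic fun j _ _ hj => by
    rw [Nat.succ_eq_succ] at hj ⊢
    exact hf j hj

theorem stmt5_general {g : Type*} [LieRing g] [LieAlgebra ℝ g] [Module.Finite ℝ g]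
    (n : LieIdeal ℝ g) (m : LieSubalgebra ℝ g)
    (hcompl : IsCompl m.toSubmodule n.toSubmodule)
    (d k : ℕ) (hd : Module.finrank ℝ g = d) (hk : Module.finrank ℝ n.toSubmodule = k)
    (gs : ℕ → Submodule ℝ g)
    (hchain : ∀ j < d, gs j ≤ gs (j + 1))
    (hgk : gs k = n.toSubmodule)
    (ξ : Module.Dual ℝ g)
    (hiso : isotropy ξ = isotropyOn m.toSubmodule ξ ⊔ isotropyOn n.toSubmodule ξ) :
    ∀ j, 1 ≤ j → j ≤ k →
      ((j ∈ jumpSetGen gs d (isotropy ξ) ↔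
          isotropyOn n.toSubmodule ξ ⊔ gs (j - 1) < isotropyOn n.toSubmodule ξ ⊔ gs j) ∧
        (j ∈ jumpSetGen gs d (isotropy ξ) ↔
          j ∈ jumpSetGen gs k (isotropyOn n.toSubmodule ξ))) := by
  intro j hj1 hjk
  have hkd : k ≤ d := hd ▸ hk ▸ Submodule.finrank_le _
  have hjd : j ≤ d := hjk.trans hkd
  have hmono := monotoneOn_Iic_of_le_succ hchain
  have hjn : gs j ≤ n.toSubmodule := hgk ▸ hmono hjd hkd hjk
  have hprev : gs (j - 1) ≤ gs j := hmono ((j.sub_le 1).trans hjd) hjd (j.sub_le 1)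
  have key : gs j ≤ gs (j - 1) ⊔ isotropy ξ ↔
      gs j ≤ gs (j - 1) ⊔ isotropyOn n.toSubmodule ξ := by
    rw [hiso]
    exact le_sup_sup_iff_le_sup_of_disjoint hcompl.disjoint (fun _ hx => hx.1)
      (hprev.trans hjn) (fun _ hx => hx.1) hjn
  simp only [jumpSetGen, Set.mem_ofPred_eq, sup_lt_sup_left_iff_not_le hprev, hj1, hjk,
    hjd, true_and]
  exact ⟨key.not, key.not⟩

/-- in the setting of Proposition `jump`, for `1 ≤ j ≤ k` one has
`j ∈ J(ξ)` iff `n(ξ|n) + g_{j-1} ⊊ n(ξ|n) + g_j` iff `j ∈ J(ξ|n)`. -/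
theorem stmt5 {g : Type*} [LieRing g] [LieAlgebra ℝ g] [Module.Finite ℝ g]
    [LieRing.IsNilpotent g]
    (n : LieIdeal ℝ g) (m : LieSubalgebra ℝ g)
    (hcompl : IsCompl m.toSubmodule n.toSubmodule)
    (d k : ℕ) (hd : Module.finrank ℝ g = d) (hk : Module.finrank ℝ n.toSubmodule = k)
    (gs : ℕ → Submodule ℝ g)
    (hgs0 : gs 0 = ⊥) (hgsd : gs d = ⊤)
    (hchain : ∀ j < d, gs j ≤ gs (j + 1))
    (hdim : ∀ j ≤ d, Module.finrank ℝ (gs j) = j)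
    (hbr : ∀ j, 1 ≤ j → j ≤ d → ∀ x : g, ∀ y ∈ gs j, ⁅x, y⁆ ∈ gs (j - 1))
    (hgk : gs k = n.toSubmodule)
    (ξ : Module.Dual ℝ g)
    (hiso : isotropy ξ = isotropyOn m.toSubmodule ξ ⊔ isotropyOn n.toSubmodule ξ)
    (hdisj : Disjoint (isotropyOn m.toSubmodule ξ) (isotropyOn n.toSubmodule ξ)) :
    ∀ j, 1 ≤ j → j ≤ k →
      ((j ∈ jumpSetGen gs d (isotropy ξ) ↔
          isotropyOn n.toSubmodule ξ ⊔ gs (j - 1) < isotropyOn n.toSubmodule ξ ⊔ gs j) ∧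
        (j ∈ jumpSetGen gs d (isotropy ξ) ↔
          j ∈ jumpSetGen gs k (isotropyOn n.toSubmodule ξ))) :=
  stmt5_general n m hcompl d k hd hk gs hchain hgk ξ hiso
end

section
/- Let g be a d-dimensional nilpotent real Lie algebra with a semidirect product decomposition g = m ⋉ n, where dim n = k, and fix a Jordan–Hölder series 0 = g_0 ⊆ g_1 ⊆ ⋯ ⊆ g_d = g with g_k = n. Let ξ ∈ g* satisfy g(ξ) = m(ξ|m) ⊕ n(ξ|n). Then for every j with k+1 ≤ j ≤ d one has: j ∈ J(ξ) if and only if m(ξ|m) + g_{j−1} is a proper subspace of m(ξ|m) + g_j, and this holds if and only if j − k ∈ J(ξ|m). -/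
open Module

/-!
Since `n = g_k ⊆ g_{j-1}` and `n(ξ|n) ⊆ n`, the splitting `g(ξ) = m(ξ|m) ⊕ n(ξ|n)` lets one drop
`n(ξ|n)` from `g_{j-1} + g(ξ)`, so the jump condition at `j` says exactly that `m(ξ|m) + g_j`
is strictly larger than `m(ξ|m) + g_{j-1}`. For the second equivalence, `g_{k+i} = m_i ⊕ n`,
and adding `n` is strictly monotone on subspaces of `m` because `m ∩ n = 0` (modular law);
hence that strict inclusion is the same as `m(ξ|m) + m_{j-k-1} ⊊ m(ξ|m) + m_{j-k}`, which is
the jump condition of the series `m_•` at `j - k`.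
-/

section Lattice

variable {α : Type*}

theorem monotoneOn_nat_Iic_of_le_succ [Preorder α] {f : ℕ → α} {d : ℕ}
    (hf : ∀ j < d, f j ≤ f (j + 1)) : MonotoneOn f (Set.Iic d) := by
  intro i _ j (hjd : j ≤ d) hij
  induction j, hij using Nat.le_induction with
  | base => exact le_rfl
  | succ n hin ih => exact (ih (by omega)).trans (hf n (by omega))

theorem sup_lt_sup_left_iff_not_le_s6 [SemilatticeSup α] {x y z : α} (hyz : y ≤ z) :
    x ⊔ y < x ⊔ z ↔ ¬ z ≤ y ⊔ x := by
  rw [lt_iff_le_not_ge, sup_comm y x]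
  exact ⟨fun h hz => h.2 (sup_le le_sup_left hz),
    fun h => ⟨sup_le_sup_left hyz x, fun h' => h (le_sup_right.trans h')⟩⟩

variable [Lattice α] [OrderBot α] [IsModularLattice α]

theorem sup_le_sup_right_iff_of_disjoint {a b x y : α} (hab : Disjoint a b) (hx : x ≤ a)
    (hy : y ≤ a) : x ⊔ b ≤ y ⊔ b ↔ x ≤ y := by
  refine ⟨fun h => ?_, fun h => sup_le_sup_right h b⟩
  calc x ≤ (y ⊔ b) ⊓ a := le_inf (le_sup_left.trans h) hx
    _ = y := by rw [sup_inf_assoc_of_le _ hy, hab.symm.eq_bot, sup_bot_eq]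

theorem sup_lt_sup_right_iff_of_disjoint {a b x y : α} (hab : Disjoint a b) (hx : x ≤ a)
    (hy : y ≤ a) : x ⊔ b < y ⊔ b ↔ x < y := by
  simp only [lt_iff_le_not_ge, sup_le_sup_right_iff_of_disjoint hab hx hy,
    sup_le_sup_right_iff_of_disjoint hab hy hx]

end Lattice

theorem Submodule.map_projection_sup_eq {R E : Type*} [Ring R] [AddCommGroup E] [Module R E]
    {p q V : Submodule R E} (hpq : IsCompl p q) (hqV : q ≤ V) :
    V.map (p.projection q hpq) ⊔ q = V := by
  refine le_antisymm (sup_le ?_ hqV) fun x hx => ?_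
  · rintro _ ⟨x, hx, rfl⟩
    simpa using V.sub_mem hx (hqV (sub_projection_mem hpq x))
  · rw [← add_sub_cancel (p.projection q hpq x) x]
    exact Submodule.add_mem_sup ⟨x, hx, rfl⟩ (sub_projection_mem hpq x)

section JumpSet

variable {g : Type*} [LieRing g] [LieAlgebra ℝ g] {gs : ℕ → Submodule ℝ g} {b j : ℕ}

theorem mem_jumpSetGen_iff {I : Submodule ℝ g} (hj : 1 ≤ j) (hjb : j ≤ b)
    (hle : gs (j - 1) ≤ gs j) : j ∈ jumpSetGen gs b I ↔ I ⊔ gs (j - 1) < I ⊔ gs j := by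
  rw [sup_lt_sup_left_iff_not_le_s6 hle]
  exact ⟨fun h => h.2.2, fun h => ⟨hj, hjb, h⟩⟩

theorem mem_jumpSetGen_sup_iff {I J : Submodule ℝ g} (hJ : J ≤ gs (j - 1)) :
    j ∈ jumpSetGen gs b (I ⊔ J) ↔ j ∈ jumpSetGen gs b I := by
  have : gs (j - 1) ⊔ (I ⊔ J) = gs (j - 1) ⊔ I := by
    rw [sup_comm I, ← sup_assoc, sup_eq_left.2 hJ]
  simp only [jumpSetGen, Set.mem_ofPred_eq, this]

end JumpSet

theorem stmt6_general {g : Type*} [LieRing g] [LieAlgebra ℝ g]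
    (n : LieIdeal ℝ g) (m : LieSubalgebra ℝ g)
    (hcompl : IsCompl m.toSubmodule n.toSubmodule)
    (d k : ℕ)
    (gs : ℕ → Submodule ℝ g)
    (hchain : ∀ j < d, gs j ≤ gs (j + 1))
    (hgk : gs k = n.toSubmodule)
    (p : g →ₗ[ℝ] g)
    (hp : p = m.toSubmodule.subtype.comp
      (Submodule.linearProjOfIsCompl m.toSubmodule n.toSubmodule hcompl))
    (ms : ℕ → Submodule ℝ g) (hms : ∀ j, ms j = (gs (k + j)).map p)
    (ξ : Module.Dual ℝ g)
    (hiso : isotropy ξ = isotropyOn m.toSubmodule ξ ⊔ isotropyOn n.toSubmodule ξ) :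
    ∀ j, k + 1 ≤ j → j ≤ d →
      ((j ∈ jumpSetGen gs d (isotropy ξ) ↔
          isotropyOn m.toSubmodule ξ ⊔ gs (j - 1) < isotropyOn m.toSubmodule ξ ⊔ gs j) ∧
        (isotropyOn m.toSubmodule ξ ⊔ gs (j - 1) < isotropyOn m.toSubmodule ξ ⊔ gs j ↔
          j - k ∈ jumpSetGen ms (d - k) (isotropyOn m.toSubmodule ξ))) := by
  intro j hkj hjd
  -- `linearProjOfIsCompl` is a deprecated alias of `projectionOnto`
  replace hp : p = m.toSubmodule.projection n.toSubmodule hcompl := hp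
  set Im := isotropyOn m.toSubmodule ξ
  have hgs_le : ∀ {i i'}, i ≤ i' → i' ≤ d → gs i ≤ gs i' := fun hii' hi'd =>
    monotoneOn_nat_Iic_of_le_succ hchain (hii'.trans hi'd) hi'd hii'
  have hn_le : n.toSubmodule ≤ gs (j - 1) := hgk ▸ hgs_le (by omega) (by omega)
  have hms_le : ∀ i, ms i ≤ m.toSubmodule := fun i => by
    rw [hms, hp]
    exact LinearMap.map_le_range.trans (Submodule.range_projection hcompl).le
  have hsplit : ∀ i, k + i ≤ d → (Im ⊔ ms i) ⊔ n.toSubmodule = Im ⊔ gs (k + i) := fun i hi => by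
    rw [sup_assoc, hms, hp, Submodule.map_projection_sup_eq hcompl (hgk ▸ hgs_le (by omega) hi)]
  have hjk : k + (j - k) = j := by omega
  have hjk1 : k + (j - k - 1) = j - 1 := by omega
  constructor
  · rw [hiso, mem_jumpSetGen_sup_iff ((isotropyOn_le _ ξ).trans hn_le),
      mem_jumpSetGen_iff (by omega) hjd (hgs_le (by omega) hjd)]
  · rw [mem_jumpSetGen_iff (by omega) (by omega)
        (by rw [hms, hms]; exact Submodule.map_mono (hgs_le (by omega) (by omega))),
      ← sup_lt_sup_right_iff_of_disjoint hcompl.disjoint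
        (sup_le (isotropyOn_le _ ξ) (hms_le _)) (sup_le (isotropyOn_le _ ξ) (hms_le _)),
      hsplit _ (by omega), hsplit _ (by omega), hjk, hjk1]

/-- in the setting of Proposition `jump`, for `k+1 ≤ j ≤ d` one has
`j ∈ J(ξ)` iff `m(ξ|m) + g_{j-1} ⊊ m(ξ|m) + g_j` iff `j - k ∈ J(ξ|m)`. -/
theorem stmt6 {g : Type*} [LieRing g] [LieAlgebra ℝ g] [Module.Finite ℝ g]
    [LieRing.IsNilpotent g]
    (n : LieIdeal ℝ g) (m : LieSubalgebra ℝ g)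
    (hcompl : IsCompl m.toSubmodule n.toSubmodule)
    (d k : ℕ) (hd : Module.finrank ℝ g = d) (hk : Module.finrank ℝ n.toSubmodule = k)
    (gs : ℕ → Submodule ℝ g)
    (hgs0 : gs 0 = ⊥) (hgsd : gs d = ⊤)
    (hchain : ∀ j < d, gs j ≤ gs (j + 1))
    (hdim : ∀ j ≤ d, Module.finrank ℝ (gs j) = j)
    (hbr : ∀ j, 1 ≤ j → j ≤ d → ∀ x : g, ∀ y ∈ gs j, ⁅x, y⁆ ∈ gs (j - 1))
    (hgk : gs k = n.toSubmodule)
    (p : g →ₗ[ℝ] g)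
    (hp : p = m.toSubmodule.subtype.comp
      (Submodule.linearProjOfIsCompl m.toSubmodule n.toSubmodule hcompl))
    (ms : ℕ → Submodule ℝ g) (hms : ∀ j, ms j = (gs (k + j)).map p)
    (ξ : Module.Dual ℝ g)
    (hiso : isotropy ξ = isotropyOn m.toSubmodule ξ ⊔ isotropyOn n.toSubmodule ξ)
    (hdisj : Disjoint (isotropyOn m.toSubmodule ξ) (isotropyOn n.toSubmodule ξ)) :
    ∀ j, k + 1 ≤ j → j ≤ d →
      ((j ∈ jumpSetGen gs d (isotropy ξ) ↔
          isotropyOn m.toSubmodule ξ ⊔ gs (j - 1) < isotropyOn m.toSubmodule ξ ⊔ gs j) ∧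
        (isotropyOn m.toSubmodule ξ ⊔ gs (j - 1) < isotropyOn m.toSubmodule ξ ⊔ gs j ↔
          j - k ∈ jumpSetGen ms (d - k) (isotropyOn m.toSubmodule ξ))) :=
  stmt6_general n m hcompl d k gs hchain hgk p hp ms hms ξ hiso
end

section
/- Let h be a nilpotent real Lie algebra of dimension d > 1 with a fixed Jordan–Hölder series, whose center z := Z(h) is 1-dimensional. If ξ ∈ h* satisfies J(ξ) = e(h), then ξ does not vanish identically on z. -/
/-!
If `ξ` vanishes on the center `z`, then, since `[h, h₁] = 0` puts `h₁` inside `z` and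
`[h, h₂] ⊆ h₁`, the functional `ξ` kills `[h, h₂]`; hence `h₂ ⊆ h(ξ)` and `1, 2 ∉ J(ξ)`.
As `dim h₂ = 2 > dim z`, some `x ∈ h₂` is not central, and any `η` with `x ∉ h(η)` has
`2 ∈ J(η)`. Then `min (J(η) \ J(ξ)) ≤ 2 ≤ min (J(ξ) \ J(η))`, so `J(ξ)` is neither equal to
nor `≺` `J(η)`, against the minimality of `J(ξ)`.
-/

open Module

/-- The minimum of a set of naturals, as an element of `ℕ∞`, with `min ∅ = ∞`. -/
noncomputable def eMin (s : Set ℕ) : ℕ∞ := sInf ((↑) '' s)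

/-- The order `e1 ≺ e2 ⟺ min(e1 \ e2) < min(e2 \ e1)`, where `min ∅ = ∞`. -/
def precRel (e1 e2 : Set ℕ) : Prop := eMin (e1 \ e2) < eMin (e2 \ e1)

theorem Submodule.exists_mem_notMem_of_finrank_lt {R M : Type*} [Ring R] [StrongRankCondition R]
    [AddCommGroup M] [Module R M] {s t : Submodule R M} [Module.Finite R t]
    (h : finrank R t < finrank R s) : ∃ x ∈ s, x ∉ t := by
  by_contra! hst
  exact (Submodule.finrank_mono hst).not_gt h

section Order

lemma eMin_le_of_mem {s : Set ℕ} {a : ℕ} (ha : a ∈ s) : eMin s ≤ a :=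
  sInf_le ⟨a, ha, rfl⟩

lemma le_eMin {s : Set ℕ} {a : ℕ∞} (h : ∀ j ∈ s, a ≤ j) : a ≤ eMin s :=
  le_sInf <| by rintro _ ⟨j, hj, rfl⟩; exact h j hj

lemma not_precRel_of_mem_sdiff {e₁ e₂ : Set ℕ} {a : ℕ} (ha : a ∈ e₂ \ e₁)
    (hle : ∀ j ∈ e₁ \ e₂, a ≤ j) : ¬ precRel e₁ e₂ :=
  not_lt.2 <| (eMin_le_of_mem ha).trans <| le_eMin fun j hj => by exact_mod_cast hle j hj

end Order

section Lie

variable {h : Type*} [LieRing h] [LieAlgebra ℝ h]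

lemma le_center_of_forall_lie_eq_zero {S : Submodule ℝ h} (hS : ∀ x : h, ∀ y ∈ S, ⁅x, y⁆ = 0) :
    S ≤ (LieAlgebra.center ℝ h : Submodule ℝ h) := fun y hy =>
  (LieModule.mem_maxTrivSubmodule ℝ h h y).2 fun x => hS x y hy

lemma center_le_isotropy (ξ : Dual ℝ h) :
    (LieAlgebra.center ℝ h : Submodule ℝ h) ≤ isotropy ξ := fun y hy x => by
  rw [← lie_skew, (LieModule.mem_maxTrivSubmodule ℝ h h y).1 hy x, neg_zero, map_zero]

lemma le_isotropy_of_lie_mem {S T : Submodule ℝ h} {ξ : Dual ℝ h}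
    (hS : ∀ x : h, ∀ y ∈ S, ⁅x, y⁆ ∈ T) (hξ : ∀ t ∈ T, ξ t = 0) : S ≤ isotropy ξ :=
  fun y hy x => by rw [← lie_skew, map_neg, hξ _ (hS x y hy), neg_zero]

lemma exists_notMem_isotropy_of_notMem_center {x : h} (hx : x ∉ LieAlgebra.center ℝ h) :
    ∃ η : Dual ℝ h, x ∉ isotropy η := by
  obtain ⟨y, hy⟩ : ∃ y : h, ⁅y, x⁆ ≠ 0 := by
    simpa [LieModule.mem_maxTrivSubmodule] using hx
  obtain ⟨η, hη⟩ := Projective.exists_dual_ne_zero ℝ hy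
  exact ⟨η, fun hmem => hη <| by rw [← lie_skew, map_neg, hmem y, neg_zero]⟩

variable {gs : ℕ → Submodule ℝ h} {b j : ℕ} {I : Submodule ℝ h}

lemma notMem_jumpSetGen_of_le (hj : gs j ≤ I) : j ∉ jumpSetGen gs b I :=
  fun hmem => hmem.2.2 (hj.trans le_sup_right)

lemma mem_jumpSetGen_of_not_le (hj : 1 ≤ j) (hjb : j ≤ b) (hprev : gs (j - 1) ≤ I)
    (hnot : ¬ gs j ≤ I) : j ∈ jumpSetGen gs b I :=
  ⟨hj, hjb, by rwa [sup_eq_right.2 hprev]⟩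

end Lie

theorem stmt7_general {h : Type*} [LieRing h] [LieAlgebra ℝ h]
    (d : ℕ) (hd1 : 1 < d)
    -- the fixed Jordan–Hölder series
    (gs : ℕ → Submodule ℝ h)
    (hgs0 : gs 0 = ⊥)
    (hdim : ∀ j ≤ d, Module.finrank ℝ (gs j) = j)
    (hbr : ∀ j, 1 ≤ j → j ≤ d → ∀ x : h, ∀ y ∈ gs j, ⁅x, y⁆ ∈ gs (j - 1))
    -- the center is 1-dimensional
    (hz : Module.finrank ℝ (LieAlgebra.center ℝ h) = 1)
    -- J(ξ) = e(h), i.e. J(ξ) is the ≺-minimum of all jump sets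
    (ξ : Module.Dual ℝ h)
    (hmin : ∀ η : Module.Dual ℝ h,
      jumpSetGen gs d (isotropy ξ) = jumpSetGen gs d (isotropy η) ∨
        precRel (jumpSetGen gs d (isotropy ξ)) (jumpSetGen gs d (isotropy η))) :
    ∃ x ∈ LieAlgebra.center ℝ h, ξ x ≠ 0 := by
  by_contra! hξ
  have hgs1z : gs 1 ≤ (LieAlgebra.center ℝ h : Submodule ℝ h) :=
    le_center_of_forall_lie_eq_zero fun x y hy => by simpa [hgs0] using hbr 1 le_rfl hd1.le x y hy
  have hgs1 (η : Dual ℝ h) : gs 1 ≤ isotropy η := hgs1z.trans (center_le_isotropy η)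
  have hgs2 : gs 2 ≤ isotropy ξ :=
    le_isotropy_of_lie_mem (hbr 2 one_le_two hd1) fun t ht => hξ t (hgs1z ht)
  have hz' : finrank ℝ (LieAlgebra.center ℝ h : Submodule ℝ h) = 1 := hz
  have : Module.Finite ℝ (LieAlgebra.center ℝ h : Submodule ℝ h) :=
    Module.finite_of_finrank_pos (hz' ▸ one_pos)
  obtain ⟨x, hx2, hxz⟩ := Submodule.exists_mem_notMem_of_finrank_lt (s := gs 2)
    (by rw [hz', hdim 2 hd1]; exact one_lt_two)
  obtain ⟨η, hη⟩ := exists_notMem_isotropy_of_notMem_center hxz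
  have h2η : 2 ∈ jumpSetGen gs d (isotropy η) :=
    mem_jumpSetGen_of_not_le one_le_two hd1 (hgs1 η) fun hle => hη (hle hx2)
  have h2ξ : 2 ∉ jumpSetGen gs d (isotropy ξ) := notMem_jumpSetGen_of_le hgs2
  have hξ2 : ∀ j ∈ jumpSetGen gs d (isotropy ξ), 2 ≤ j := by
    rintro j hj
    obtain rfl | hj1 := hj.1.eq_or_lt
    · exact absurd hj (notMem_jumpSetGen_of_le (hgs1 ξ))
    · exact hj1
  rcases hmin η with heq | hprec
  · exact h2ξ (heq ▸ h2η)
  · exact not_precRel_of_mem_sdiff ⟨h2η, h2ξ⟩ (fun j hj => hξ2 j hj.1) hprec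

/-- if `h` is nilpotent of dimension `d > 1` with 1-dimensional
center and `J(ξ) = e(h)`, then `ξ` does not vanish identically on the center. -/
theorem stmt7 {h : Type*} [LieRing h] [LieAlgebra ℝ h] [Module.Finite ℝ h]
    [LieRing.IsNilpotent h]
    (d : ℕ) (hd : Module.finrank ℝ h = d) (hd1 : 1 < d)
    -- the fixed Jordan–Hölder series
    (gs : ℕ → Submodule ℝ h)
    (hgs0 : gs 0 = ⊥) (hgsd : gs d = ⊤)
    (hchain : ∀ j < d, gs j ≤ gs (j + 1))
    (hdim : ∀ j ≤ d, Module.finrank ℝ (gs j) = j)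
    (hbr : ∀ j, 1 ≤ j → j ≤ d → ∀ x : h, ∀ y ∈ gs j, ⁅x, y⁆ ∈ gs (j - 1))
    -- the center is 1-dimensional
    (hz : Module.finrank ℝ (LieAlgebra.center ℝ h) = 1)
    -- J(ξ) = e(h), i.e. J(ξ) is the ≺-minimum of all jump sets
    (ξ : Module.Dual ℝ h)
    (hmin : ∀ η : Module.Dual ℝ h,
      jumpSetGen gs d (isotropy ξ) = jumpSetGen gs d (isotropy η) ∨
        precRel (jumpSetGen gs d (isotropy ξ)) (jumpSetGen gs d (isotropy η))) :
    ∃ x ∈ LieAlgebra.center ℝ h, ξ x ≠ 0 :=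
  stmt7_general d hd1 gs hgs0 hdim hbr hz ξ hmin
end

section
/- Let g be a d-dimensional nilpotent real Lie algebra with a semidirect product decomposition g = m ⋉ n, where dim n = k, and fix a Jordan–Hölder series 0 = g_0 ⊆ g_1 ⊆ ⋯ ⊆ g_d = g with g_k = n. Suppose ξ ∈ g* satisfies ξ([x,y]) = 0 for all x ∈ m, y ∈ n, together with J(ξ) = e(g) and J(ξ|n) = e(n). Then J(ξ|m) = e(m). -/
open Module

/-!
If `θ` kills `[m, n]`, its isotropy is compatible with the splitting `g = m ⊕ n`, and the jump set
of `θ` along a series through `n` splits as `J(θ|n) ∪ (k + J(θ|m))`. Given any `ζ`, the functional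
`η` that agrees with `ξ` on `n` and with `ζ` on `m` again kills `[m, n]`, so
`J(η) = J(ξ|n) ∪ (k + J(ζ|m))`. The minimality of `J(ξ) = J(ξ|n) ∪ (k + J(ξ|m))` against `J(η)`
then passes to `J(ξ|m)` against `J(ζ|m)`, since the common part `J(ξ|n)` lies below `k` and
cancels from `≺`.
-/

open Submodule

section ShiftedUnion

lemma eMin_image_add (k : ℕ) (S : Set ℕ) : eMin ((k + ·) '' S) = k + eMin S := by
  simp only [eMin, Set.image_image, sInf_image, ENat.add_iInf, Nat.cast_add]

variable {k : ℕ} {A X Y : Set ℕ}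

lemma union_image_add_diff (hA : ∀ a ∈ A, a ≤ k) (hX : ∀ x ∈ X, 1 ≤ x) :
    (A ∪ (k + ·) '' X) \ (A ∪ (k + ·) '' Y) = (k + ·) '' (X \ Y) := by
  ext j
  simp only [Set.mem_sdiff, Set.mem_union, Set.mem_image, not_or, not_exists, not_and]
  constructor
  · rintro ⟨hj | ⟨i, hiX, rfl⟩, hjA, hjY⟩
    · exact absurd hj hjA
    · exact ⟨i, ⟨hiX, fun hiY => hjY i hiY rfl⟩, rfl⟩
  · rintro ⟨i, ⟨hiX, hiY⟩, rfl⟩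
    refine ⟨Or.inr ⟨i, hiX, rfl⟩, fun hiA => ?_, fun i' hi'Y hi' => ?_⟩
    · have := hA _ hiA; have := hX i hiX; omega
    · exact hiY (Nat.add_left_cancel hi' ▸ hi'Y)

lemma eq_of_union_image_add_eq (hA : ∀ a ∈ A, a ≤ k) (hX : ∀ x ∈ X, 1 ≤ x)
    (hY : ∀ y ∈ Y, 1 ≤ y) (h : A ∪ (k + ·) '' X = A ∪ (k + ·) '' Y) : X = Y := by
  refine Set.Subset.antisymm ?_ ?_ <;>
    rw [← Set.sdiff_eq_empty, ← Set.image_eq_empty (f := (k + ·))]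
  · rw [← union_image_add_diff hA hX, h, Set.sdiff_self]
  · rw [← union_image_add_diff hA hY, h, Set.sdiff_self]

lemma precRel_of_union_image_add (hA : ∀ a ∈ A, a ≤ k) (hX : ∀ x ∈ X, 1 ≤ x)
    (hY : ∀ y ∈ Y, 1 ≤ y) (h : precRel (A ∪ (k + ·) '' X) (A ∪ (k + ·) '' Y)) :
    precRel X Y := by
  rw [precRel, union_image_add_diff hA hX, union_image_add_diff hA hY, eMin_image_add,
    eMin_image_add] at h
  exact lt_of_add_lt_add_left h

end ShiftedUnion

section Isotropy

variable {g : Type*} [LieRing g] [LieAlgebra ℝ g]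

lemma inf_isotropy_le_isotropyOn (W : Submodule ℝ g) (θ : Dual ℝ g) :
    W ⊓ isotropy θ ≤ isotropyOn W θ :=
  fun _ hx => ⟨hx.1, fun y _ => hx.2 y⟩

lemma isotropyOn_congr {W : Submodule ℝ g} (hW : ∀ x ∈ W, ∀ y ∈ W, ⁅x, y⁆ ∈ W)
    {θ θ' : Dual ℝ g} (h : ∀ x ∈ W, θ x = θ' x) : isotropyOn W θ = isotropyOn W θ' := by
  ext x
  refine and_congr_right fun hx => forall₂_congr fun y hy => ?_
  rw [h _ (hW x hx y hy)]

variable {n : LieIdeal ℝ g} {m : LieSubalgebra ℝ g} {θ : Dual ℝ g}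

lemma mem_isotropy_of_isCompl (hcompl : IsCompl m.toSubmodule n.toSubmodule) {x : g}
    (hm : ∀ y ∈ m, θ ⁅x, y⁆ = 0) (hn : ∀ y ∈ n, θ ⁅x, y⁆ = 0) : x ∈ isotropy θ := by
  intro y
  obtain ⟨a, ha, b, hb, rfl⟩ := mem_sup.mp (hcompl.sup_eq_top ▸ mem_top : y ∈ _ ⊔ _)
  rw [lie_add, map_add, hm a ha, hn b hb, add_zero]

lemma isotropyOn_ideal_le_isotropy (hcompl : IsCompl m.toSubmodule n.toSubmodule)
    (hθ : ∀ x ∈ m, ∀ y ∈ n, θ ⁅x, y⁆ = 0) : isotropyOn n.toSubmodule θ ≤ isotropy θ :=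
  fun x ⟨hxn, hx⟩ => mem_isotropy_of_isCompl hcompl
    (fun y hy => by rw [← lie_skew, map_neg, hθ y hy x hxn, neg_zero]) hx

lemma isotropyOn_subalgebra_le_isotropy (hcompl : IsCompl m.toSubmodule n.toSubmodule)
    (hθ : ∀ x ∈ m, ∀ y ∈ n, θ ⁅x, y⁆ = 0) : isotropyOn m.toSubmodule θ ≤ isotropy θ :=
  fun x ⟨hxm, hx⟩ => mem_isotropy_of_isCompl hcompl hx (hθ x hxm)

lemma map_projection_isotropy_le (hcompl : IsCompl m.toSubmodule n.toSubmodule)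
    (hθ : ∀ x ∈ m, ∀ y ∈ n, θ ⁅x, y⁆ = 0) :
    (isotropy θ).map (m.toSubmodule.projection n.toSubmodule hcompl) ≤
      isotropyOn m.toSubmodule θ := by
  rintro _ ⟨x, hx, rfl⟩
  refine ⟨projection_apply_mem hcompl x, fun y hy => ?_⟩
  have hxn : θ ⁅x - m.toSubmodule.projection n.toSubmodule hcompl x, y⁆ = 0 := by
    rw [← lie_skew, map_neg, hθ y hy _ (sub_projection_mem hcompl x), neg_zero]
  rwa [sub_lie, map_sub, hx y, zero_sub, neg_eq_zero] at hxn

end Isotropy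

section Projection

variable {R E : Type*} [Ring R] [AddCommGroup E] [Module R E] {P Q : Submodule R E}
  (hPQ : IsCompl P Q)

lemma le_map_projection_sup (U : Submodule R E) : U ≤ U.map (P.projection Q hPQ) ⊔ Q :=
  fun x hx => mem_sup.mpr ⟨_, ⟨x, hx, rfl⟩, _, sub_projection_mem hPQ x, add_sub_cancel _ _⟩

lemma map_projection_le {V : Submodule R E} (hQV : Q ≤ V) : V.map (P.projection Q hPQ) ≤ V := by
  rintro _ ⟨x, hx, rfl⟩
  rw [← sub_sub_cancel x (P.projection Q hPQ x)]
  exact V.sub_mem hx (hQV (sub_projection_mem hPQ x))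

end Projection

section JumpSets

variable {g : Type*} [LieRing g] [LieAlgebra ℝ g] {n : LieIdeal ℝ g} {m : LieSubalgebra ℝ g}
  {θ : Dual ℝ g} {U V : Submodule ℝ g}

lemma le_sup_isotropy_iff_of_le_ideal (hcompl : IsCompl m.toSubmodule n.toSubmodule)
    (hθ : ∀ x ∈ m, ∀ y ∈ n, θ ⁅x, y⁆ = 0) (hU : U ≤ n.toSubmodule) (hV : V ≤ n.toSubmodule) :
    U ≤ V ⊔ isotropy θ ↔ U ≤ V ⊔ isotropyOn n.toSubmodule θ := by
  refine ⟨fun h => ?_, fun h => h.trans <|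
    sup_le_sup_left (isotropyOn_ideal_le_isotropy hcompl hθ) _⟩
  calc U ≤ (V ⊔ isotropy θ) ⊓ n.toSubmodule := le_inf h hU
    _ = V ⊔ isotropy θ ⊓ n.toSubmodule := sup_inf_assoc_of_le _ hV
    _ ≤ V ⊔ isotropyOn n.toSubmodule θ := by
      rw [inf_comm]; exact sup_le_sup_left (inf_isotropy_le_isotropyOn _ θ) _

lemma le_sup_isotropy_iff_map_projection (hcompl : IsCompl m.toSubmodule n.toSubmodule)
    (hθ : ∀ x ∈ m, ∀ y ∈ n, θ ⁅x, y⁆ = 0) (hnV : n.toSubmodule ≤ V) :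
    U ≤ V ⊔ isotropy θ ↔
      U.map (m.toSubmodule.projection n.toSubmodule hcompl) ≤
        V.map (m.toSubmodule.projection n.toSubmodule hcompl) ⊔ isotropyOn m.toSubmodule θ := by
  set p := m.toSubmodule.projection n.toSubmodule hcompl
  constructor
  · intro h
    calc U.map p ≤ (V ⊔ isotropy θ).map p := map_mono h
      _ = V.map p ⊔ (isotropy θ).map p := map_sup _ _ _
      _ ≤ V.map p ⊔ isotropyOn m.toSubmodule θ :=
        sup_le_sup_left (map_projection_isotropy_le hcompl hθ) _
  · intro h
    calc U ≤ U.map p ⊔ n.toSubmodule := le_map_projection_sup hcompl U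
      _ ≤ V.map p ⊔ isotropyOn m.toSubmodule θ ⊔ n.toSubmodule := sup_le_sup_right h _
      _ ≤ V ⊔ isotropy θ := sup_le (sup_le_sup (map_projection_le hcompl hnV)
          (isotropyOn_subalgebra_le_isotropy hcompl hθ)) (hnV.trans le_sup_left)

lemma jumpSetGen_isotropy_eq_union (hcompl : IsCompl m.toSubmodule n.toSubmodule)
    (hθ : ∀ x ∈ m, ∀ y ∈ n, θ ⁅x, y⁆ = 0) {gs : ℕ → Submodule ℝ g} {d k : ℕ} (hkd : k ≤ d)
    (hmono : MonotoneOn gs (Set.Iic d)) (hgk : gs k = n.toSubmodule) :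
    jumpSetGen gs d (isotropy θ) =
      jumpSetGen gs k (isotropyOn n.toSubmodule θ) ∪ (k + ·) ''
        jumpSetGen (fun j => (gs (k + j)).map (m.toSubmodule.projection n.toSubmodule hcompl))
          (d - k) (isotropyOn m.toSubmodule θ) := by
  have hle_n : ∀ j ≤ k, gs j ≤ n.toSubmodule := fun j hj =>
    hgk ▸ hmono (hj.trans hkd) hkd hj
  have hn_le : ∀ j, k ≤ j → j ≤ d → n.toSubmodule ≤ gs j := fun j hkj hjd =>
    hgk ▸ hmono hkd hjd hkj
  ext j
  simp only [jumpSetGen, Set.mem_union, Set.mem_image]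
  constructor
  · rintro ⟨h1j, hjd, hj⟩
    rcases le_or_gt j k with hjk | hkj
    · rw [le_sup_isotropy_iff_of_le_ideal hcompl hθ (hle_n j hjk) (hle_n _ (by omega))] at hj
      exact Or.inl ⟨h1j, hjk, hj⟩
    · obtain ⟨i, rfl⟩ : ∃ i, j = k + i := ⟨j - k, by omega⟩
      rw [le_sup_isotropy_iff_map_projection hcompl hθ (hn_le _ (by omega) (by omega)),
        show k + i - 1 = k + (i - 1) by omega] at hj
      exact Or.inr ⟨i, ⟨by omega, by omega, hj⟩, rfl⟩
  · rintro (⟨h1j, hjk, hj⟩ | ⟨i, ⟨h1i, hid, hi⟩, rfl⟩)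
    · rw [← le_sup_isotropy_iff_of_le_ideal hcompl hθ (hle_n j hjk) (hle_n _ (by omega))] at hj
      exact ⟨h1j, hjk.trans hkd, hj⟩
    · rw [show k + (i - 1) = k + i - 1 by omega,
        ← le_sup_isotropy_iff_map_projection hcompl hθ (hn_le _ (by omega) (by omega))] at hi
      exact ⟨by omega, by omega, hi⟩

end JumpSets

theorem stmt11_general {g : Type*} [LieRing g] [LieAlgebra ℝ g] [Module.Finite ℝ g]
    (n : LieIdeal ℝ g) (m : LieSubalgebra ℝ g)
    (hcompl : IsCompl m.toSubmodule n.toSubmodule)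
    (d k : ℕ) (hd : Module.finrank ℝ g = d) (hk : Module.finrank ℝ n.toSubmodule = k)
    -- the Jordan–Hölder series passing through n at index k
    (gs : ℕ → Submodule ℝ g)
    (hchain : ∀ j < d, gs j ≤ gs (j + 1))
    (hgk : gs k = n.toSubmodule)
    -- the projected series of m
    (p : g →ₗ[ℝ] g)
    (hp : p = m.toSubmodule.subtype.comp
      (Submodule.linearProjOfIsCompl m.toSubmodule n.toSubmodule hcompl))
    (ms : ℕ → Submodule ℝ g) (hms : ∀ j, ms j = (gs (k + j)).map p)
    (ξ : Module.Dual ℝ g)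
    -- ξ([m,n]) = 0
    (hξ : ∀ x ∈ m, ∀ y ∈ n, ξ ⁅x, y⁆ = 0)
    -- J(ξ) = e(g)
    (hJg : ∀ η : Module.Dual ℝ g,
      jumpSetGen gs d (isotropy ξ) = jumpSetGen gs d (isotropy η) ∨
        precRel (jumpSetGen gs d (isotropy ξ)) (jumpSetGen gs d (isotropy η))) :
    -- J(ξ|m) = e(m)
    ∀ ζ : Module.Dual ℝ g,
      jumpSetGen ms (d - k) (isotropyOn m.toSubmodule ξ) =
          jumpSetGen ms (d - k) (isotropyOn m.toSubmodule ζ) ∨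
        precRel (jumpSetGen ms (d - k) (isotropyOn m.toSubmodule ξ))
          (jumpSetGen ms (d - k) (isotropyOn m.toSubmodule ζ)) := by
  intro ζ
  obtain rfl : p = m.toSubmodule.projection n.toSubmodule hcompl := hp
  set p := m.toSubmodule.projection n.toSubmodule hcompl
  obtain rfl : ms = fun j => (gs (k + j)).map p := funext hms
  have hkd : k ≤ d := hk ▸ hd ▸ finrank_le _
  have hmono : MonotoneOn gs (Set.Iic d) := monotoneOn_of_le_succ Set.ordConnected_Iic
    fun j _ _ hj => by rw [Order.succ_eq_add_one] at hj ⊢; exact hchain j hj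
  let η : Dual ℝ g := ξ + (ζ - ξ) ∘ₗ p
  have hηn : ∀ x ∈ n.toSubmodule, η x = ξ x := fun x hx => by
    simp [η, p, (projection_apply_eq_zero_iff hcompl).mpr hx]
  have hηm : ∀ x ∈ m.toSubmodule, η x = ζ x := fun x hx => by
    simp [η, p, projection_apply_of_mem_left hcompl hx]
  have hη : ∀ x ∈ m, ∀ y ∈ n, η ⁅x, y⁆ = 0 := fun x hx y hy =>
    (hηn _ (n.lie_mem hy)).trans (hξ x hx y hy)
  have hJξ := jumpSetGen_isotropy_eq_union hcompl hξ hkd hmono hgk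
  have hJη := jumpSetGen_isotropy_eq_union hcompl hη hkd hmono hgk
  rw [isotropyOn_congr (fun x _ y hy => n.lie_mem hy) hηn,
    isotropyOn_congr (fun x hx y hy => m.lie_mem hx hy) hηm] at hJη
  have hA : ∀ a ∈ jumpSetGen gs k (isotropyOn n.toSubmodule ξ), a ≤ k := fun _ ha => ha.2.1
  rcases hJg η with h | h <;> rw [hJξ, hJη] at h
  · exact .inl (eq_of_union_image_add_eq hA (fun _ hj => hj.1) (fun _ hj => hj.1) h)
  · exact .inr (precRel_of_union_image_add hA (fun _ hj => hj.1) (fun _ hj => hj.1) h)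

/-- if `g = m ⋉ n` is nilpotent, `ξ([m,n]) = 0`, `J(ξ) = e(g)`
and `J(ξ|n) = e(n)`, then `J(ξ|m) = e(m)`. Minimality of a jump set is
expressed by comparing it, via `≺`, with the jump sets of all functionals
(every functional on `n`, resp. `m`, is the restriction of one on `g`). -/
theorem stmt11 {g : Type*} [LieRing g] [LieAlgebra ℝ g] [Module.Finite ℝ g]
    [LieRing.IsNilpotent g]
    (n : LieIdeal ℝ g) (m : LieSubalgebra ℝ g)
    (hcompl : IsCompl m.toSubmodule n.toSubmodule)
    (d k : ℕ) (hd : Module.finrank ℝ g = d) (hk : Module.finrank ℝ n.toSubmodule = k)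
    -- the Jordan–Hölder series passing through n at index k
    (gs : ℕ → Submodule ℝ g)
    (hgs0 : gs 0 = ⊥) (hgsd : gs d = ⊤)
    (hchain : ∀ j < d, gs j ≤ gs (j + 1))
    (hdim : ∀ j ≤ d, Module.finrank ℝ (gs j) = j)
    (hbr : ∀ j, 1 ≤ j → j ≤ d → ∀ x : g, ∀ y ∈ gs j, ⁅x, y⁆ ∈ gs (j - 1))
    (hgk : gs k = n.toSubmodule)
    -- the projected series of m
    (p : g →ₗ[ℝ] g)
    (hp : p = m.toSubmodule.subtype.comp
      (Submodule.linearProjOfIsCompl m.toSubmodule n.toSubmodule hcompl))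
    (ms : ℕ → Submodule ℝ g) (hms : ∀ j, ms j = (gs (k + j)).map p)
    (ξ : Module.Dual ℝ g)
    -- ξ([m,n]) = 0
    (hξ : ∀ x ∈ m, ∀ y ∈ n, ξ ⁅x, y⁆ = 0)
    -- J(ξ) = e(g)
    (hJg : ∀ η : Module.Dual ℝ g,
      jumpSetGen gs d (isotropy ξ) = jumpSetGen gs d (isotropy η) ∨
        precRel (jumpSetGen gs d (isotropy ξ)) (jumpSetGen gs d (isotropy η)))
    -- J(ξ|n) = e(n)
    (hJn : ∀ η : Module.Dual ℝ g,
      jumpSetGen gs k (isotropyOn n.toSubmodule ξ) =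
          jumpSetGen gs k (isotropyOn n.toSubmodule η) ∨
        precRel (jumpSetGen gs k (isotropyOn n.toSubmodule ξ))
          (jumpSetGen gs k (isotropyOn n.toSubmodule η))) :
    -- J(ξ|m) = e(m)
    ∀ ζ : Module.Dual ℝ g,
      jumpSetGen ms (d - k) (isotropyOn m.toSubmodule ξ) =
          jumpSetGen ms (d - k) (isotropyOn m.toSubmodule ζ) ∨
        precRel (jumpSetGen ms (d - k) (isotropyOn m.toSubmodule ξ))
          (jumpSetGen ms (d - k) (isotropyOn m.toSubmodule ζ)) :=
  stmt11_general n m hcompl d k hd hk gs hchain hgk p hp ms hms ξ hξ hJg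
end
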